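/- arXiv:2102.07907 — 3 statements merged into one kernel-verified Lean document; each statement's English description precedes it below -/
import Mathlib

section
/- Let s, t, b, Δ be real numbers with Δ > 0, and suppose 2R₀ = -b² - s²/2 + t²/2 - 2Δ² + tX/(2Δ²) and R₀ = -s²/4 - t²/4 + Δ² - t²b²/(8Δ²) + tX/(4Δ²) where X is a real number (the quantity ⟨JDb,b⟩). Then (1 + b²/(4Δ²))(t² - 4Δ²) = 0, hence t = 2Δ or t = -2Δ. -/
/-- Uniform distortion compatibility: from R₁₂₁₂+R₁₃₁₃ and R₂₃₂₃ one derives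
(1 + b²/(4Δ²))(t² - 4Δ²) = 0, hence t = ±2Δ. -/
theorem stmt_0 (s t b Δ R₀ X : ℝ) (hΔ : Δ > 0)
    (h1 : 2 * R₀ = -b ^ 2 - s ^ 2 / 2 + t ^ 2 / 2 - 2 * Δ ^ 2 + t * X / (2 * Δ ^ 2))
    (h2 : R₀ = -s ^ 2 / 4 - t ^ 2 / 4 + Δ ^ 2 - t ^ 2 * b ^ 2 / (8 * Δ ^ 2)
        + t * X / (4 * Δ ^ 2)) :
    (1 + b ^ 2 / (4 * Δ ^ 2)) * (t ^ 2 - 4 * Δ ^ 2) = 0 ∧ (t = 2 * Δ ∨ t = -2 * Δ) := by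
  have hΔ2 : Δ ^ 2 ≠ 0 := pow_ne_zero _ (ne_of_gt hΔ)
  have key2 : Δ ^ 2 * ((4 * Δ ^ 2 + b ^ 2) * (t ^ 2 - 4 * Δ ^ 2)) = 0 := by
    field_simp at h1 h2
    linear_combination (-2 * Δ ^ 2) * h1 + (Δ ^ 2 / 4) * h2
  have key : (1 + b ^ 2 / (4 * Δ ^ 2)) * (t ^ 2 - 4 * Δ ^ 2) = 0 := by
    have h3 := (mul_eq_zero.mp key2).resolve_left hΔ2
    field_simp
    linarith [h3]
  refine ⟨key, ?_⟩
  have hpos : 1 + b ^ 2 / (4 * Δ ^ 2) > 0 := by positivity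
  have ht2 : t ^ 2 = (2 * Δ) ^ 2 := by
    have := (mul_eq_zero.mp key).resolve_left (ne_of_gt hpos)
    nlinarith
  rcases sq_eq_sq_iff_eq_or_eq_neg.mp ht2 with h | h
  · exact Or.inl h
  · exact Or.inr (by linarith)
end

section
/- Let R₀ > 0 and let Δ > 0, b⊥, b×, Δ₁, Δ₂ ∈ ℝ with Δ² = Δ₁² + Δ₂², b² = b⊥² + b×², and δ ∈ {1,-1}. Then the equation 2R₀Δ + ⟨Db,b⟩²/(8Δ³) + b²Δ + δ⟨JDb,b⟩ = 0 has no solution, where ⟨Db,b⟩ = (b⊥² - b×²)Δ₁ + 2b⊥b×Δ₂ and ⟨JDb,b⟩ = (b×² - b⊥²)Δ₂ + 2b⊥b×Δ₁. -/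
/-- No uniform distortion field with nonvanishing biaxial splay in positive curvature. -/
theorem stmt_3 (R₀ Δ bp bx Δ₁ Δ₂ b δ : ℝ) (hR : R₀ > 0) (hΔ : Δ > 0)
    (hΔsq : Δ ^ 2 = Δ₁ ^ 2 + Δ₂ ^ 2) (hbsq : b ^ 2 = bp ^ 2 + bx ^ 2)
    (hδ : δ = 1 ∨ δ = -1) :
    ¬ (2 * R₀ * Δ + ((bp ^ 2 - bx ^ 2) * Δ₁ + 2 * bp * bx * Δ₂) ^ 2 / (8 * Δ ^ 3)
        + b ^ 2 * Δ + δ * ((bx ^ 2 - bp ^ 2) * Δ₂ + 2 * bp * bx * Δ₁) = 0) := by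
  intro h
  have hq : ((bp ^ 2 - bx ^ 2) * Δ₁ + 2 * bp * bx * Δ₂) ^ 2 / (8 * Δ ^ 3) ≥ 0 :=
    div_nonneg (sq_nonneg _) (by positivity)
  have hb2 : b ^ 2 ≥ 0 := sq_nonneg b
  have key : b ^ 2 * Δ + δ * ((bx ^ 2 - bp ^ 2) * Δ₂ + 2 * bp * bx * Δ₁) ≥ 0 := by
    have h1 : (b ^ 2 * Δ) ^ 2 - ((bx ^ 2 - bp ^ 2) * Δ₂ + 2 * bp * bx * Δ₁) ^ 2
        = ((bx ^ 2 - bp ^ 2) * Δ₁ - 2 * bp * bx * Δ₂) ^ 2 := by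
      rw [hbsq]; linear_combination (bp ^ 2 + bx ^ 2) ^ 2 * hΔsq
    have h2 : |(bx ^ 2 - bp ^ 2) * Δ₂ + 2 * bp * bx * Δ₁| ≤ b ^ 2 * Δ := by
      have hbΔ : b ^ 2 * Δ ≥ 0 := by positivity
      rw [abs_le]
      constructor <;> nlinarith [sq_nonneg ((bx ^ 2 - bp ^ 2) * Δ₁ - 2 * bp * bx * Δ₂)]
    rcases hδ with rfl | rfl
    · nlinarith [abs_le.mp h2]
    · nlinarith [abs_le.mp h2]
  nlinarith [mul_pos hR hΔ]
end

section
/- Let Δ > 0, b⊥, b×, Δ₁, Δ₂ ∈ ℝ with Δ² = Δ₁² + Δ₂², b² = b⊥² + b×², δ ∈ {1,-1}, and suppose ⟨Db,b⟩²/(8Δ³) + b²Δ + δ⟨JDb,b⟩ = 0 (the case R₀ = 0). Then ⟨Db,b⟩ = 0 and b²Δ = -δ⟨JDb,b⟩, where ⟨Db,b⟩ = (b⊥² - b×²)Δ₁ + 2b⊥b×Δ₂ and ⟨JDb,b⟩ = (b×² - b⊥²)Δ₂ + 2b⊥b×Δ₁. -/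
/-- Flat-space case: both nonnegative summands must vanish. -/
theorem stmt_4 (Δ bp bx Δ₁ Δ₂ b δ : ℝ) (hΔ : Δ > 0)
    (hΔsq : Δ ^ 2 = Δ₁ ^ 2 + Δ₂ ^ 2) (hbsq : b ^ 2 = bp ^ 2 + bx ^ 2)
    (hδ : δ = 1 ∨ δ = -1)
    (h : ((bp ^ 2 - bx ^ 2) * Δ₁ + 2 * bp * bx * Δ₂) ^ 2 / (8 * Δ ^ 3)
        + b ^ 2 * Δ + δ * ((bx ^ 2 - bp ^ 2) * Δ₂ + 2 * bp * bx * Δ₁) = 0) :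
    (bp ^ 2 - bx ^ 2) * Δ₁ + 2 * bp * bx * Δ₂ = 0 ∧
    b ^ 2 * Δ = -δ * ((bx ^ 2 - bp ^ 2) * Δ₂ + 2 * bp * bx * Δ₁) := by
  set S := (bp ^ 2 - bx ^ 2) * Δ₁ + 2 * bp * bx * Δ₂ with hS
  set T := (bx ^ 2 - bp ^ 2) * Δ₂ + 2 * bp * bx * Δ₁ with hT
  clear_value S T
  have hδ2 : δ ^ 2 = 1 := by rcases hδ with h1 | h1 <;> rw [h1] <;> ring
  have hsum : S ^ 2 + T ^ 2 = (b ^ 2) ^ 2 * Δ ^ 2 := by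
    rw [hS, hT, hbsq, hΔsq]; ring
  have hpos : b ^ 2 * Δ + δ * T ≥ 0 := by
    nlinarith [sq_nonneg (b ^ 2 * Δ + δ * T), sq_nonneg (b ^ 2 * Δ - δ * T),
      sq_nonneg S, sq_nonneg b, hΔ.le, mul_nonneg (sq_nonneg b) hΔ.le]
  have hΔ3 : 8 * Δ ^ 3 > 0 := by positivity
  have hS0 : S ^ 2 / (8 * Δ ^ 3) = 0 := by
    have hq : S ^ 2 / (8 * Δ ^ 3) ≥ 0 := by positivity
    nlinarith [h, hpos, hq]
  have hS' : S = 0 := by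
    have := (div_eq_zero_iff.mp hS0).resolve_right (by linarith)
    exact pow_eq_zero_iff (n := 2) (by norm_num) |>.mp this
  exact ⟨hS', by rw [hS0] at h; linarith⟩
end
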